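/- arXiv:0810.5259 — 4 statements merged into one kernel-verified Lean document; each statement's English description precedes it below -/
import Mathlib

section
/- For every ε > 0, every (z,t) ∈ V × 𝔱 and every j = 1, …, m, the function d_ε is differentiable at (z,t) and (X_j d_ε)(z,t) = d_ε(z,t)^{1−4k} ( |z|^{4k−2} ⟨z, e_j⟩ + 4 |z|^{2k−2} ⟨J_t(z), e_j⟩ ). -/
open MeasureTheory Real

noncomputable section

/-- `V = ℝ^m` with its standard inner product. -/
abbrev Vspace (m : ℕ) : Type := EuclideanSpace ℝ (Fin m)

/-- `𝔱 = ℝ^q` with its standard inner product. -/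
abbrev Tspace (q : ℕ) : Type := EuclideanSpace ℝ (Fin q)

/-- The vector field `X_j` applied to a function `f`: the directional derivative of `f`
at `(z,t)` in the direction `(e_j, (k/2)|z|^{2k-2}[z, e_j])`, where the bracket is `B`. -/
def Xop {m q : ℕ} (B : Vspace m →ₗ[ℝ] Vspace m →ₗ[ℝ] Tspace q)
    (e : Fin m → Vspace m) (k : ℝ) (f : Vspace m × Tspace q → ℝ) (j : Fin m)
    (p : Vspace m × Tspace q) : ℝ :=
  fderiv ℝ f p (e j, ((k / 2) * ‖p.1‖ ^ (2 * k - 2)) • B p.1 (e j))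

/-- `|∇_X f| = (Σ_j (X_j f)²)^{1/2}`. -/
def gradXnorm {m q : ℕ} (B : Vspace m →ₗ[ℝ] Vspace m →ₗ[ℝ] Tspace q)
    (e : Fin m → Vspace m) (k : ℝ) (f : Vspace m × Tspace q → ℝ)
    (p : Vspace m × Tspace q) : ℝ :=
  Real.sqrt (∑ j, (Xop B e k f j p) ^ 2)

/-- The homogeneous norm `d(z,t) = (|z|^{4k} + 16|t|²)^{1/(4k)}`. -/
def dfun {m q : ℕ} (k : ℝ) (p : Vspace m × Tspace q) : ℝ :=
  (‖p.1‖ ^ (4 * k) + 16 * ‖p.2‖ ^ (2 : ℝ)) ^ (1 / (4 * k))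

/-- The regularization `d_ε = (d^{4k} + ε^{4k})^{1/(4k)}`. -/
def dEps {m q : ℕ} (k ε : ℝ) (p : Vspace m × Tspace q) : ℝ :=
  (dfun k p ^ (4 * k) + ε ^ (4 * k)) ^ (1 / (4 * k))

/-- The degenerate `p`-Laplacian `L_{p,k} u = Σ_j X_j(|∇_X u|^{p-2} X_j u)`. -/
def Lpk {m q : ℕ} (B : Vspace m →ₗ[ℝ] Vspace m →ₗ[ℝ] Tspace q)
    (e : Fin m → Vspace m) (k p₀ : ℝ) (u : Vspace m × Tspace q → ℝ)
    (x : Vspace m × Tspace q) : ℝ :=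
  ∑ j, Xop B e k (fun y => gradXnorm B e k u y ^ (p₀ - 2) * Xop B e k u j y) j x

/-! For `ε > 0` the radicand of `d_ε = (|z|^{4k} + 16|t|² + ε^{4k})^{1/(4k)}` is positive, and
`4k > 1` makes `|z|^{4k}` differentiable even at `z = 0`, so `d_ε` is differentiable by the chain
rule. In the direction of `X_j`, the `t`-component contributes `⟨t, [z, e_j]⟩ = ⟨J_t z, e_j⟩`. -/

section

variable {m q : ℕ} {k ε : ℝ}

lemma dfun_rpow_four_mul (hk : k ≠ 0) (p : Vspace m × Tspace q) :
    dfun k p ^ (4 * k) = ‖p.1‖ ^ (4 * k) + 16 * ‖p.2‖ ^ (2 : ℝ) := by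
  rw [dfun, ← rpow_mul (by positivity), one_div, inv_mul_cancel₀ (by positivity), rpow_one]

lemma dEps_eq_rpow (hk : k ≠ 0) : dEps (m := m) (q := q) k ε =
    fun p => (‖p.1‖ ^ (4 * k) + 16 * ‖p.2‖ ^ (2 : ℝ) + ε ^ (4 * k)) ^ (1 / (4 * k)) := by
  funext p
  rw [dEps, dfun_rpow_four_mul hk]

theorem hasFDerivAt_dEps (hk : 1 < 4 * k) (hε : 0 < ε) (p : Vspace m × Tspace q) :
    HasFDerivAt (dEps k ε)
      (dEps k ε p ^ (1 - 4 * k) •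
        (‖p.1‖ ^ (4 * k - 2) • (innerSL ℝ p.1).comp (.fst ℝ _ _) +
          (8 / k) • (innerSL ℝ p.2).comp (.snd ℝ _ _))) p := by
  have hk0 : k ≠ 0 := by rintro rfl; norm_num at hk
  have hN : HasFDerivAt (fun p : Vspace m × Tspace q =>
      ‖p.1‖ ^ (4 * k) + 16 * ‖p.2‖ ^ (2 : ℝ) + ε ^ (4 * k))
      (((4 * k) * ‖p.1‖ ^ (4 * k - 2)) • (innerSL ℝ p.1).comp (.fst ℝ _ _) +
        (16 : ℝ) • ((2 * ‖p.2‖ ^ ((2 : ℝ) - 2)) • (innerSL ℝ p.2).comp (.snd ℝ _ _))) p :=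
    (((hasFDerivAt_norm_rpow p.1 hk).comp p hasFDerivAt_fst).add
      (((hasFDerivAt_norm_rpow p.2 one_lt_two).comp p hasFDerivAt_snd).const_smul
        (16 : ℝ))).add_const _
  have hpos : 0 < ‖p.1‖ ^ (4 * k) + 16 * ‖p.2‖ ^ (2 : ℝ) + ε ^ (4 * k) := by positivity
  rw [dEps_eq_rpow hk0]
  refine (hN.rpow_const (p := 1 / (4 * k)) (Or.inl hpos.ne')).congr_fderiv ?_
  rw [← rpow_mul hpos.le, show 1 / (4 * k) * (1 - 4 * k) = 1 / (4 * k) - 1 by field_simp]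
  refine ContinuousLinearMap.ext fun v => ?_
  simp only [one_div, mul_inv_rev, rpow_ofNat, sub_self, rpow_zero, mul_one, smul_add,
    add_apply, smul_apply, ContinuousLinearMap.comp_apply, ContinuousLinearMap.coe_fst',
    ContinuousLinearMap.coe_snd', coe_innerSL_apply, smul_eq_mul]
  field_simp
  ring

end

theorem stmt2_general {m q : ℕ}
    (B : Vspace m →ₗ[ℝ] Vspace m →ₗ[ℝ] Tspace q)
    (J : Tspace q → Vspace m →ₗ[ℝ] Vspace m)
    (hJ : ∀ (t : Tspace q) (u v : Vspace m),
      (inner ℝ (J t u) v : ℝ) = inner ℝ t (B u v))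
    (e : OrthonormalBasis (Fin m) ℝ (Vspace m)) (k : ℝ) (hk : 1 ≤ k)
    (ε : ℝ) (hε : 0 < ε) (z : Vspace m) (t : Tspace q) (j : Fin m) :
    DifferentiableAt ℝ (dEps (m := m) (q := q) k ε) (z, t) ∧
      Xop B (⇑e) k (dEps k ε) j (z, t) =
        dEps k ε (z, t) ^ (1 - 4 * k) *
          (‖z‖ ^ (4 * k - 2) * (inner ℝ z (e j) : ℝ) +
            4 * ‖z‖ ^ (2 * k - 2) * (inner ℝ (J t z) (e j) : ℝ)) := by
  have hD := hasFDerivAt_dEps (m := m) (q := q) (k := k) (by linarith) hε (z, t)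
  refine ⟨hD.differentiableAt, ?_⟩
  rw [Xop, hD.fderiv]
  simp only [smul_add, add_apply, smul_apply,
    ContinuousLinearMap.comp_apply, ContinuousLinearMap.coe_fst', ContinuousLinearMap.coe_snd',
    coe_innerSL_apply, smul_eq_mul, map_smul]
  rw [hJ t z (e j)]
  field_simp
  ring

/-- For every `ε > 0`, `(z,t)` and `j`, the function `d_ε` is
differentiable at `(z,t)` and
`X_j d_ε = d_ε^{1-4k}(|z|^{4k-2}⟨z,e_j⟩ + 4|z|^{2k-2}⟨J_t z, e_j⟩)`. -/
theorem stmt2 {m q : ℕ} (hm : 1 ≤ m) (hq : 1 ≤ q)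
    (B : Vspace m →ₗ[ℝ] Vspace m →ₗ[ℝ] Tspace q)
    (hskew : ∀ u v : Vspace m, B u v = -B v u)
    (J : Tspace q → Vspace m →ₗ[ℝ] Vspace m)
    (hJ : ∀ (t : Tspace q) (u v : Vspace m),
      (inner ℝ (J t u) v : ℝ) = inner ℝ t (B u v))
    (hH : ∀ (t : Tspace q) (z : Vspace m), J t (J t z) = -(‖t‖ ^ 2) • z)
    (e : OrthonormalBasis (Fin m) ℝ (Vspace m)) (k : ℝ) (hk : 1 ≤ k)
    (ε : ℝ) (hε : 0 < ε) (z : Vspace m) (t : Tspace q) (j : Fin m) :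
    DifferentiableAt ℝ (dEps (m := m) (q := q) k ε) (z, t) ∧
      Xop B (⇑e) k (dEps k ε) j (z, t) =
        dEps k ε (z, t) ^ (1 - 4 * k) *
          (‖z‖ ^ (4 * k - 2) * (inner ℝ z (e j) : ℝ) +
            4 * ‖z‖ ^ (2 * k - 2) * (inner ℝ (J t z) (e j) : ℝ)) :=
  stmt2_general B J hJ e k hk ε hε z t j
end
end

section
/- For every ε > 0 and every (z,t) ∈ V × 𝔱 one has |∇_X d_ε|²(z,t) = Σ_{j=1}^m ((X_j d_ε)(z,t))² = d(z,t)^{4k} · d_ε(z,t)^{2−8k} · |z|^{4k−2}. -/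
open MeasureTheory Real

noncomputable section

/-!
Since `d_ε = (|z|^{4k} + 16|t|² + ε^{4k})^{1/(4k)}`, the chain rule gives
`X_j d_ε = d_ε^{1-4k} / (4k) · ⟨w, e_j⟩` with `w = 4k|z|^{4k-2} z + 16k|z|^{2k-2} J_t z`
the horizontal gradient of `d^{4k}`; here `⟨t, [z, e_j]⟩ = ⟨J_t z, e_j⟩` is what turns the
vertical part of `X_j` into a horizontal vector. Parseval replaces `Σ_j ⟨w, e_j⟩²` by `|w|²`, and
the H-type identities `⟨J_t z, z⟩ = 0`, `|J_t z| = |t| |z|` give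
`|w|² = 16k² |z|^{4k-2} d^{4k}`.
-/

open scoped RealInnerProductSpace

namespace HType

variable {E F : Type*} [NormedAddCommGroup E] [InnerProductSpace ℝ E]
  [NormedAddCommGroup F] [InnerProductSpace ℝ F]
  {B : E →ₗ[ℝ] E →ₗ[ℝ] F} {J : F → E →ₗ[ℝ] E}

lemma inner_apply_self_eq_zero (hskew : ∀ u v, B u v = -B v u)
    (hJ : ∀ t u v, ⟪J t u, v⟫ = ⟪t, B u v⟫) (t : F) (z : E) : ⟪J t z, z⟫ = 0 := by
  have hBzz : B z z = 0 := by
    have h := hskew z z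
    rw [eq_neg_iff_add_eq_zero, ← two_smul ℝ] at h
    exact (smul_eq_zero.mp h).resolve_left two_ne_zero
  rw [hJ, hBzz, inner_zero_right]

lemma norm_apply_sq (hskew : ∀ u v, B u v = -B v u)
    (hJ : ∀ t u v, ⟪J t u, v⟫ = ⟪t, B u v⟫) (hH : ∀ t z, J t (J t z) = -(‖t‖ ^ 2) • z)
    (t : F) (z : E) : ‖J t z‖ ^ 2 = ‖t‖ ^ 2 * ‖z‖ ^ 2 := by
  rw [← real_inner_self_eq_norm_sq, hJ, hskew, inner_neg_right, ← hJ, hH,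
    real_inner_smul_left, real_inner_self_eq_norm_sq]
  ring

lemma norm_smul_add_smul_apply_sq (hskew : ∀ u v, B u v = -B v u)
    (hJ : ∀ t u v, ⟪J t u, v⟫ = ⟪t, B u v⟫) (hH : ∀ t z, J t (J t z) = -(‖t‖ ^ 2) • z)
    (a b : ℝ) (t : F) (z : E) :
    ‖a • z + b • J t z‖ ^ 2 = a ^ 2 * ‖z‖ ^ 2 + b ^ 2 * (‖t‖ ^ 2 * ‖z‖ ^ 2) := by
  rw [norm_add_sq_real, real_inner_smul_left, real_inner_smul_right, real_inner_comm,
    inner_apply_self_eq_zero hskew hJ, norm_smul, norm_smul, mul_pow, mul_pow,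
    norm_apply_sq hskew hJ hH, Real.norm_eq_abs, Real.norm_eq_abs, sq_abs, sq_abs]
  ring

lemma norm_horizontal_gradient_sq (hskew : ∀ u v, B u v = -B v u)
    (hJ : ∀ t u v, ⟪J t u, v⟫ = ⟪t, B u v⟫) (hH : ∀ t z, J t (J t z) = -(‖t‖ ^ 2) • z)
    {k : ℝ} (hk : 1 / 2 < k) (t : F) (z : E) :
    ‖(4 * k * ‖z‖ ^ (4 * k - 2)) • z + (16 * k * ‖z‖ ^ (2 * k - 2)) • J t z‖ ^ 2 =
      16 * k ^ 2 * ‖z‖ ^ (4 * k - 2) * (‖z‖ ^ (4 * k) + 16 * ‖t‖ ^ 2) := by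
  set r := ‖z‖
  have hr : 0 ≤ r := norm_nonneg z
  have h1 : r ^ (4 * k - 2) * r ^ 2 = r ^ (4 * k) := by
    rw [← Real.rpow_two, ← Real.rpow_add' hr (by linarith)]
    ring_nf
  have h2 : (r ^ (2 * k - 2)) ^ 2 * r ^ 2 = r ^ (4 * k - 2) := by
    rw [← Real.rpow_mul_natCast hr, ← Real.rpow_two, ← Real.rpow_add' hr (by push_cast; linarith)]
    ring_nf
  rw [norm_smul_add_smul_apply_sq hskew hJ hH]
  linear_combination (16 * k ^ 2 * r ^ (4 * k - 2)) * h1 + (256 * k ^ 2 * ‖t‖ ^ 2) * h2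

end HType

section Regularization

variable {m q : ℕ} {k ε : ℝ}

lemma dfun_rpow (hk : k ≠ 0) (p : Vspace m × Tspace q) :
    dfun k p ^ (4 * k) = ‖p.1‖ ^ (4 * k) + 16 * ‖p.2‖ ^ 2 := by
  rw [dfun, ← Real.rpow_mul (by positivity), one_div_mul_cancel (by positivity), Real.rpow_one,
    Real.rpow_two]

lemma dEps_eq (hk : k ≠ 0) :
    dEps (m := m) (q := q) k ε =
      fun p => (‖p.1‖ ^ (4 * k) + 16 * ‖p.2‖ ^ 2 + ε ^ (4 * k)) ^ (1 / (4 * k)) := by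
  funext p
  rw [dEps, dfun_rpow hk]

lemma fderiv_dEps_apply (hk : 1 / 4 < k) (hε : 0 < ε) (z u : Vspace m) (t v : Tspace q) :
    fderiv ℝ (dEps k ε) (z, t) (u, v) =
      dEps k ε (z, t) ^ (1 - 4 * k) / (4 * k) *
        (4 * k * ‖z‖ ^ (4 * k - 2) * ⟪z, u⟫ + 32 * ⟪t, v⟫) := by
  have hk0 : k ≠ 0 := by positivity
  set G : ℝ := ‖z‖ ^ (4 * k) + 16 * ‖t‖ ^ 2 + ε ^ (4 * k)
  have hG : 0 < G := by positivity
  have hderiv : HasFDerivAt (fun p : Vspace m × Tspace q =>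
      (‖p.1‖ ^ (4 * k) + 16 * ‖p.2‖ ^ 2 + ε ^ (4 * k)) ^ (1 / (4 * k))) _ (z, t) :=
    ((((hasFDerivAt_norm_rpow z (by linarith)).comp (z, t) hasFDerivAt_fst).add
      (hasFDerivAt_snd.norm_sq.const_mul 16)).add_const (ε ^ (4 * k))).rpow_const
        (p := 1 / (4 * k)) (Or.inl hG.ne')
  have hcoeff :
      dEps k ε (z, t) ^ (1 - 4 * k) / (4 * k) = 1 / (4 * k) * G ^ (1 / (4 * k) - 1) := by
    rw [dEps_eq hk0, ← Real.rpow_mul hG.le]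
    field_simp
  rw [hcoeff, dEps_eq hk0, hderiv.fderiv]
  simp only [one_div, mul_inv_rev, Pi.add_apply, Function.comp_apply,
    ContinuousLinearMap.smul_comp, smul_add, add_apply, smul_apply,
    ContinuousLinearMap.comp_apply, ContinuousLinearMap.coe_fst', ContinuousLinearMap.coe_snd',
    coe_innerSL_apply, smul_eq_mul, nsmul_eq_mul, Nat.cast_ofNat]
  ring

lemma Xop_dEps (B : Vspace m →ₗ[ℝ] Vspace m →ₗ[ℝ] Tspace q)
    (J : Tspace q → Vspace m →ₗ[ℝ] Vspace m)
    (hJ : ∀ t u v, ⟪J t u, v⟫ = ⟪t, B u v⟫) (hk : 1 / 4 < k) (hε : 0 < ε)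
    (e : Fin m → Vspace m) (j : Fin m) (z : Vspace m) (t : Tspace q) :
    Xop B e k (dEps k ε) j (z, t) = dEps k ε (z, t) ^ (1 - 4 * k) / (4 * k) *
      ⟪(4 * k * ‖z‖ ^ (4 * k - 2)) • z + (16 * k * ‖z‖ ^ (2 * k - 2)) • J t z, e j⟫ := by
  rw [Xop, fderiv_dEps_apply hk hε, inner_add_left, real_inner_smul_left, real_inner_smul_left,
    hJ, real_inner_smul_right, real_inner_comm (e j)]
  ring

end Regularization

theorem stmt3_general {m q : ℕ}
    (B : Vspace m →ₗ[ℝ] Vspace m →ₗ[ℝ] Tspace q)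
    (hskew : ∀ u v : Vspace m, B u v = -B v u)
    (J : Tspace q → Vspace m →ₗ[ℝ] Vspace m)
    (hJ : ∀ (t : Tspace q) (u v : Vspace m),
      (inner ℝ (J t u) v : ℝ) = inner ℝ t (B u v))
    (hH : ∀ (t : Tspace q) (z : Vspace m), J t (J t z) = -(‖t‖ ^ 2) • z)
    (e : OrthonormalBasis (Fin m) ℝ (Vspace m)) (k : ℝ) (hk : 1 ≤ k)
    (ε : ℝ) (hε : 0 < ε) (z : Vspace m) (t : Tspace q) :
    ∑ j, (Xop B (⇑e) k (dEps k ε) j (z, t)) ^ 2 =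
      dfun k (z, t) ^ (4 * k) * dEps k ε (z, t) ^ (2 - 8 * k) *
        ‖z‖ ^ (4 * k - 2) := by
  have hdEps : 0 ≤ dEps k ε (z, t) := by unfold dEps dfun; positivity
  have hsq : (dEps k ε (z, t) ^ (1 - 4 * k)) ^ 2 = dEps k ε (z, t) ^ (2 - 8 * k) := by
    rw [← Real.rpow_mul_natCast hdEps]
    ring_nf
  simp_rw [Xop_dEps B J hJ (k := k) (by linarith) hε, mul_pow, ← Finset.mul_sum,
    e.sum_sq_inner_left, HType.norm_horizontal_gradient_sq hskew hJ hH (k := k) (by linarith),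
    dfun_rpow (by positivity : k ≠ 0), div_pow, hsq]
  field_simp
  ring

/-- `|∇_X d_ε|² = Σ_j (X_j d_ε)² = d^{4k} d_ε^{2-8k} |z|^{4k-2}`. -/
theorem stmt3 {m q : ℕ} (hm : 1 ≤ m) (hq : 1 ≤ q)
    (B : Vspace m →ₗ[ℝ] Vspace m →ₗ[ℝ] Tspace q)
    (hskew : ∀ u v : Vspace m, B u v = -B v u)
    (J : Tspace q → Vspace m →ₗ[ℝ] Vspace m)
    (hJ : ∀ (t : Tspace q) (u v : Vspace m),
      (inner ℝ (J t u) v : ℝ) = inner ℝ t (B u v))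
    (hH : ∀ (t : Tspace q) (z : Vspace m), J t (J t z) = -(‖t‖ ^ 2) • z)
    (e : OrthonormalBasis (Fin m) ℝ (Vspace m)) (k : ℝ) (hk : 1 ≤ k)
    (ε : ℝ) (hε : 0 < ε) (z : Vspace m) (t : Tspace q) :
    ∑ j, (Xop B (⇑e) k (dEps k ε) j (z, t)) ^ 2 =
      dfun k (z, t) ^ (4 * k) * dEps k ε (z, t) ^ (2 - 8 * k) *
        ‖z‖ ^ (4 * k - 2) :=
  stmt3_general B hskew J hJ hH e k hk ε hε z t
end
end

section
/- For every ε > 0 and every (z,t) ∈ V × 𝔱 with z ≠ 0 one has Σ_{j=1}^m (X_j² (d_ε^{4k}))(z,t) = 4k(4k − 2 + Q) |z|^{4k−2}, where Q = m + 2kq. -/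
/-! Since `d_ε^{4k} = |z|^{4k} + 16|t|² + ε^{4k}`, both applications of `X_j` can be computed
explicitly. Summing over `j`, Parseval's identity turns `Σ ⟨z, e_j⟩²` into `|z|²`, the mixed terms
add up to `⟨J_t z, z⟩ = 0` by skew-symmetry, and the H-type condition `|J_t z| = |t| |z|` gives
`Σ_j |[z, e_j]|² = q |z|²`, which is where the `2kq` in `Q` comes from. -/

open MeasureTheory Real

noncomputable section

open RealInnerProductSpace

lemma hasFDerivAt_norm_rpow_of_ne_zero {E : Type*} [NormedAddCommGroup E] [InnerProductSpace ℝ E]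
    {x : E} (hx : x ≠ 0) (p : ℝ) :
    HasFDerivAt (fun x : E ↦ ‖x‖ ^ p) ((p * ‖x‖ ^ (p - 2)) • innerSL ℝ x) x := by
  have h := (hasStrictFDerivAt_norm_sq x).hasFDerivAt.rpow_const (p := p / 2)
    (Or.inl (by positivity))
  convert h using 1
  · funext y
    rw [← Real.rpow_natCast_mul (norm_nonneg _)]
    ring_nf
  · rw [← Real.rpow_natCast_mul (norm_nonneg _), ← Nat.cast_smul_eq_nsmul ℝ, smul_smul]
    ring_nf

section HType

variable {E F : Type*} [NormedAddCommGroup E] [InnerProductSpace ℝ E]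
  [NormedAddCommGroup F] [InnerProductSpace ℝ F] {B : E →ₗ[ℝ] E →ₗ[ℝ] F}

lemma apply_self_eq_zero_of_skew (hskew : ∀ u v, B u v = -B v u) (u : E) : B u u = 0 := by
  have h : (2 : ℝ) • B u u = 0 := by
    rw [two_smul]
    nth_rewrite 1 [hskew]
    exact neg_add_cancel _
  simpa using h

variable {J : F → E →ₗ[ℝ] E}

lemma inner_apply_self_eq_zero_of_skew (hskew : ∀ u v, B u v = -B v u)
    (hJ : ∀ t u v, ⟪J t u, v⟫ = ⟪t, B u v⟫) (t : F) (u : E) : ⟪J t u, u⟫ = 0 := by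
  rw [hJ, apply_self_eq_zero_of_skew hskew, inner_zero_right]

lemma norm_apply_sq_eq_of_isHType (hskew : ∀ u v, B u v = -B v u)
    (hJ : ∀ t u v, ⟪J t u, v⟫ = ⟪t, B u v⟫) (hH : ∀ t u, J t (J t u) = -(‖t‖ ^ 2) • u)
    (t : F) (u : E) : ‖J t u‖ ^ 2 = ‖t‖ ^ 2 * ‖u‖ ^ 2 := by
  rw [← real_inner_self_eq_norm_sq, ← real_inner_self_eq_norm_sq u, hJ, hskew, inner_neg_right,
    ← hJ, hH, real_inner_smul_left]
  ring

variable {ι : Type*} [Fintype ι]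

lemma OrthonormalBasis.sum_inner_mul_inner_bracket (hskew : ∀ u v, B u v = -B v u)
    (hJ : ∀ t u v, ⟪J t u, v⟫ = ⟪t, B u v⟫) (e : OrthonormalBasis ι ℝ E) (t : F) (z : E) :
    ∑ j, ⟪z, e j⟫ * ⟪t, B z (e j)⟫ = 0 := by
  simp_rw [← hJ, real_inner_comm _ (J t z)]
  rw [e.sum_inner_mul_inner, real_inner_comm, inner_apply_self_eq_zero_of_skew hskew hJ]

lemma OrthonormalBasis.sum_norm_bracket_sq [FiniteDimensional ℝ F]
    (hskew : ∀ u v, B u v = -B v u) (hJ : ∀ t u v, ⟪J t u, v⟫ = ⟪t, B u v⟫)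
    (hH : ∀ t u, J t (J t u) = -(‖t‖ ^ 2) • u) (e : OrthonormalBasis ι ℝ E) (z : E) :
    ∑ j, ‖B z (e j)‖ ^ 2 = Module.finrank ℝ F * ‖z‖ ^ 2 := by
  let f := stdOrthonormalBasis ℝ F
  calc ∑ j, ‖B z (e j)‖ ^ 2 = ∑ i, ∑ j, ⟪J (f i) z, e j⟫ ^ 2 := by
        simp_rw [← f.sum_sq_inner_right, hJ]
        exact Finset.sum_comm
    _ = ∑ _i : Fin (Module.finrank ℝ F), ‖z‖ ^ 2 := by
        simp_rw [e.sum_sq_inner_left, norm_apply_sq_eq_of_isHType hskew hJ hH, f.orthonormal.1,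
          one_pow, one_mul]
    _ = Module.finrank ℝ F * ‖z‖ ^ 2 := by simp

end HType

section Xop

variable {m q : ℕ} (B : Vspace m →ₗ[ℝ] Vspace m →ₗ[ℝ] Tspace q) (e : Fin m → Vspace m) (k : ℝ)

def dPowAdd (c : ℝ) (p : Vspace m × Tspace q) : ℝ := ‖p.1‖ ^ (4 * k) + 16 * ‖p.2‖ ^ 2 + c

lemma Xop_eq_of_hasFDerivAt {f : Vspace m × Tspace q → ℝ} {f' : Vspace m × Tspace q →L[ℝ] ℝ}
    {p : Vspace m × Tspace q} (j : Fin m) (hf : HasFDerivAt f f' p) :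
    Xop B e k f j p = f' (e j, ((k / 2) * ‖p.1‖ ^ (2 * k - 2)) • B p.1 (e j)) := by
  rw [Xop, hf.fderiv]

lemma Xop_dPowAdd (hk : 1 ≤ k) (c : ℝ) (j : Fin m) (p : Vspace m × Tspace q) :
    Xop B e k (dPowAdd k c) j p =
      4 * k * ‖p.1‖ ^ (4 * k - 2) * ⟪p.1, e j⟫ +
        16 * k * ‖p.1‖ ^ (2 * k - 2) * ⟪p.2, B p.1 (e j)⟫ := by
  have hz : HasFDerivAt (fun p : Vspace m × Tspace q ↦ ‖p.1‖ ^ (4 * k)) _ p :=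
    (hasFDerivAt_norm_rpow p.1 (by linarith : 1 < 4 * k)).comp p hasFDerivAt_fst
  have ht : HasFDerivAt (fun p : Vspace m × Tspace q ↦ ‖p.2‖ ^ 2) _ p :=
    (hasStrictFDerivAt_norm_sq p.2).hasFDerivAt.comp p hasFDerivAt_snd
  have hF : HasFDerivAt (dPowAdd k c) _ p := (hz.add (ht.const_mul 16)).add_const c
  rw [Xop_eq_of_hasFDerivAt B e k j hF]
  simp only [add_apply, smul_apply, ContinuousLinearMap.comp_apply, ContinuousLinearMap.coe_fst',
    ContinuousLinearMap.coe_snd', coe_innerSL_apply, map_smul, smul_eq_mul, nsmul_eq_mul,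
    Nat.cast_ofNat]
  ring

lemma Xop_Xop_dPowAdd (hk : 1 ≤ k) (c : ℝ) {j : Fin m} (he : ‖e j‖ = 1) (hB : B (e j) (e j) = 0)
    {p : Vspace m × Tspace q} (hp : p.1 ≠ 0) :
    Xop B e k (Xop B e k (dPowAdd k c) j) j p =
      4 * k * ‖p.1‖ ^ (4 * k - 2) + 4 * k * (4 * k - 2) * ‖p.1‖ ^ (4 * k - 4) * ⟪p.1, e j⟫ ^ 2
        + 8 * k ^ 2 * ‖p.1‖ ^ (4 * k - 4) * ‖B p.1 (e j)‖ ^ 2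
        + 32 * k * (k - 1) * ‖p.1‖ ^ (2 * k - 4) * (⟪p.1, e j⟫ * ⟪p.2, B p.1 (e j)⟫) := by
  rw [funext (Xop_dPowAdd B e k hk c j)]
  have ha : HasFDerivAt (fun p : Vspace m × Tspace q ↦ ‖p.1‖ ^ (4 * k - 2)) _ p :=
    (hasFDerivAt_norm_rpow_of_ne_zero hp _).comp p hasFDerivAt_fst
  have hb : HasFDerivAt (fun p : Vspace m × Tspace q ↦ ⟪p.1, e j⟫) _ p :=
    hasFDerivAt_fst.inner ℝ (hasFDerivAt_const _ _)
  have hc : HasFDerivAt (fun p : Vspace m × Tspace q ↦ ‖p.1‖ ^ (2 * k - 2)) _ p :=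
    (hasFDerivAt_norm_rpow_of_ne_zero hp _).comp p hasFDerivAt_fst
  have hd : HasFDerivAt (fun p : Vspace m × Tspace q ↦ ⟪p.2, B p.1 (e j)⟫) _ p :=
    hasFDerivAt_snd.inner ℝ
      ((B.flip (e j)).toContinuousLinearMap.hasFDerivAt.comp p hasFDerivAt_fst)
  have hG : HasFDerivAt (fun p : Vspace m × Tspace q ↦
      4 * k * ‖p.1‖ ^ (4 * k - 2) * ⟪p.1, e j⟫ +
        16 * k * ‖p.1‖ ^ (2 * k - 2) * ⟪p.2, B p.1 (e j)⟫) _ p :=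
    ((ha.const_mul _).mul hb).add ((hc.const_mul _).mul hd)
  rw [Xop_eq_of_hasFDerivAt B e k j hG]
  have hpow : ‖p.1‖ ^ (2 * k - 2) * ‖p.1‖ ^ (2 * k - 2) = ‖p.1‖ ^ (4 * k - 4) := by
    rw [← Real.rpow_add (norm_pos_iff.mpr hp)]
    ring_nf
  simp only [add_apply, smul_apply, zero_apply, ContinuousLinearMap.smul_comp,
    ContinuousLinearMap.comp_apply, ContinuousLinearMap.prod_apply, ContinuousLinearMap.coe_fst',
    ContinuousLinearMap.coe_snd', LinearMap.coe_toContinuousLinearMap', LinearMap.flip_apply,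
    fderivInnerCLM_apply, coe_innerSL_apply, inner_zero_right, real_inner_self_eq_norm_sq,
    real_inner_smul_left, he, hB, smul_eq_mul]
  rw [show 4 * k - 2 - 2 = 4 * k - 4 by ring, show 2 * k - 2 - 2 = 2 * k - 4 by ring]
  linear_combination 8 * k ^ 2 * ‖B p.1 (e j)‖ ^ 2 * hpow

end Xop

lemma dEps_rpow_eq {m q : ℕ} {k ε : ℝ} (hk : 0 < k) (hε : 0 ≤ ε) (p : Vspace m × Tspace q) :
    dEps k ε p ^ (4 * k) = dPowAdd k (ε ^ (4 * k)) p := by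
  have h4k : 4 * k ≠ 0 := by positivity
  rw [dEps, dfun, dPowAdd, one_div, Real.rpow_inv_rpow (by positivity) h4k,
    Real.rpow_inv_rpow (by positivity) h4k, Real.rpow_two]

theorem stmt4_general {m q : ℕ}
    (B : Vspace m →ₗ[ℝ] Vspace m →ₗ[ℝ] Tspace q)
    (hskew : ∀ u v : Vspace m, B u v = -B v u)
    (J : Tspace q → Vspace m →ₗ[ℝ] Vspace m)
    (hJ : ∀ (t : Tspace q) (u v : Vspace m),
      (inner ℝ (J t u) v : ℝ) = inner ℝ t (B u v))
    (hH : ∀ (t : Tspace q) (z : Vspace m), J t (J t z) = -(‖t‖ ^ 2) • z)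
    (e : OrthonormalBasis (Fin m) ℝ (Vspace m)) (k : ℝ) (hk : 1 ≤ k)
    (Q : ℝ) (hQ : Q = m + 2 * k * q)
    (ε : ℝ) (hε : 0 < ε) (z : Vspace m) (t : Tspace q) (hz : z ≠ 0) :
    ∑ j, Xop B (⇑e) k (Xop B (⇑e) k (fun y => dEps k ε y ^ (4 * k)) j) j (z, t) =
      4 * k * (4 * k - 2 + Q) * ‖z‖ ^ (4 * k - 2) := by
  have hpow : ‖z‖ ^ (4 * k - 4) * ‖z‖ ^ 2 = ‖z‖ ^ (4 * k - 2) := by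
    rw [← Real.rpow_natCast, ← Real.rpow_add (norm_pos_iff.mpr hz)]
    ring_nf
  simp_rw [dEps_rpow_eq (by linarith : 0 < k) hε.le]
  rw [Finset.sum_congr rfl fun j _ ↦ Xop_Xop_dPowAdd B e k hk _ (e.orthonormal.1 j)
    (apply_self_eq_zero_of_skew hskew _) hz]
  simp only [Finset.sum_add_distrib, ← Finset.mul_sum, Finset.sum_const, Finset.card_univ,
    Fintype.card_fin, nsmul_eq_mul]
  rw [e.sum_sq_inner_left, e.sum_norm_bracket_sq hskew hJ hH, finrank_euclideanSpace_fin,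
    e.sum_inner_mul_inner_bracket hskew hJ, hQ]
  linear_combination (4 * k * (4 * k - 2) + 8 * k ^ 2 * q) * hpow

/-- For `z ≠ 0`, `Σ_j X_j²(d_ε^{4k}) = 4k(4k-2+Q)|z|^{4k-2}`,
where `Q = m + 2kq`. -/
theorem stmt4 {m q : ℕ} (hm : 1 ≤ m) (hq : 1 ≤ q)
    (B : Vspace m →ₗ[ℝ] Vspace m →ₗ[ℝ] Tspace q)
    (hskew : ∀ u v : Vspace m, B u v = -B v u)
    (J : Tspace q → Vspace m →ₗ[ℝ] Vspace m)
    (hJ : ∀ (t : Tspace q) (u v : Vspace m),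
      (inner ℝ (J t u) v : ℝ) = inner ℝ t (B u v))
    (hH : ∀ (t : Tspace q) (z : Vspace m), J t (J t z) = -(‖t‖ ^ 2) • z)
    (e : OrthonormalBasis (Fin m) ℝ (Vspace m)) (k : ℝ) (hk : 1 ≤ k)
    (Q : ℝ) (hQ : Q = m + 2 * k * q)
    (ε : ℝ) (hε : 0 < ε) (z : Vspace m) (t : Tspace q) (hz : z ≠ 0) :
    ∑ j, Xop B (⇑e) k (Xop B (⇑e) k (fun y => dEps k ε y ^ (4 * k)) j) j (z, t) =
      4 * k * (4 * k - 2 + Q) * ‖z‖ ^ (4 * k - 2) :=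
  stmt4_general B hskew J hJ hH e k hk Q hQ ε hε z t hz
end
end

section
/- For every real γ ≥ 0 one has ∫_{{(z,t) ∈ V×𝔱 : d(z,t) < 1}} |z|^γ dz dt = (1/(2(γ+Q))) · (1/4)^{q−1} · π^{(q+m)/2} · Γ((γ+m)/(4k)) / ( Γ(m/2) · Γ((γ+Q)/(4k)) ), where Q = m + 2kq and the integral is with respect to Lebesgue measure on V × 𝔱 ≅ ℝ^{m+q}. -/
open MeasureTheory Real

noncomputable section

/-!
Slicing at fixed `z`, the condition `d(z,t) < 1` says exactly that `t` lies in the ball of radius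
`√(1 - |z|^{4k}) / 4` in `𝔱`, so Fubini turns the integral into
`ω_q 4^{-q} ∫_V |z|^γ (1 - |z|^{4k})_+^{q/2} dz`, where `ω_q` is the volume of the unit ball.
Polar coordinates in `V` and the substitution `u = r^{4k}` make this a Beta integral
`B((γ+m)/(4k), q/2 + 1)`, and `Γ(x+1) = x Γ(x)` collapses the constants to the stated form.
-/

open Set Metric

theorem Real.integral_rpow_mul_one_sub_rpow {a b : ℝ} (ha : 0 < a) (hb : 0 < b) :
    ∫ x in (0 : ℝ)..1, x ^ (a - 1) * (1 - x) ^ (b - 1) =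
      Real.Gamma a * Real.Gamma b / Real.Gamma (a + b) := by
  have hβ : Complex.betaIntegral a b =
      ↑(∫ x in (0 : ℝ)..1, x ^ (a - 1) * (1 - x) ^ (b - 1)) := by
    rw [Complex.betaIntegral, ← intervalIntegral.integral_ofReal]
    refine intervalIntegral.integral_congr fun x hx => ?_
    rw [uIcc_of_le zero_le_one] at hx
    push_cast
    rw [Complex.ofReal_cpow hx.1, Complex.ofReal_cpow (sub_nonneg.2 hx.2)]
    push_cast
    ring_nf
  have h := Complex.betaIntegral_eq_Gamma_mul_div a b (by simpa using ha) (by simpa using hb)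
  rw [hβ, ← Complex.ofReal_add, Complex.Gamma_ofReal, Complex.Gamma_ofReal,
    Complex.Gamma_ofReal] at h
  exact_mod_cast h

theorem integral_rpow_mul_comp_rpow_Ioi {p : ℝ} (hp : 0 < p) (s : ℝ) (f : ℝ → ℝ) :
    ∫ r in Ioi (0 : ℝ), r ^ (s - 1) * f (r ^ p) =
      p⁻¹ * ∫ u in Ioi (0 : ℝ), u ^ (s / p - 1) * f u := by
  rw [← integral_comp_rpow_Ioi_of_pos (g := fun u => u ^ (s / p - 1) * f u) hp,
    ← integral_const_mul]
  refine setIntegral_congr_fun measurableSet_Ioi fun r (hr : 0 < r) => ?_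
  rw [smul_eq_mul, ← rpow_mul hr.le, ← mul_assoc, ← mul_assoc, inv_mul_cancel_left₀ hp.ne',
    ← rpow_add hr]
  congr 2
  field_simp
  ring

/-- Since `√(1 - u) = 0` for `u ≥ 1`, the integral is really over `(0, 1]`. -/
theorem integral_rpow_mul_sqrt_one_sub_pow_Ioi {a : ℝ} (ha : 0 < a) {q : ℕ} (hq : q ≠ 0) :
    ∫ u in Ioi (0 : ℝ), u ^ (a - 1) * √(1 - u) ^ q =
      Real.Gamma a * Real.Gamma (q / 2 + 1) / Real.Gamma (a + (q / 2 + 1)) := by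
  have hsupp : ∀ u ∈ Ioi (0 : ℝ), u ^ (a - 1) * √(1 - u) ^ q =
      (Ioc 0 1).indicator (fun u => u ^ (a - 1) * (1 - u) ^ ((q / 2 + 1 : ℝ) - 1)) u := by
    intro u hu
    by_cases h : u ≤ 1
    · rw [indicator_of_mem (mem_Ioc.2 ⟨hu, h⟩), sqrt_eq_rpow, ← rpow_natCast,
        ← rpow_mul (by linarith)]
      congr 2
      ring
    · rw [indicator_of_notMem fun hmem => h hmem.2, sqrt_eq_zero_of_nonpos (by linarith),
        zero_pow hq, mul_zero]
  rw [setIntegral_congr_fun measurableSet_Ioi hsupp, integral_indicator measurableSet_Ioc,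
    Measure.restrict_restrict measurableSet_Ioc, inter_eq_self_of_subset_left Ioc_subset_Ioi_self,
    ← intervalIntegral.integral_of_le zero_le_one,
    Real.integral_rpow_mul_one_sub_rpow ha (by positivity)]

theorem EuclideanSpace.volume_real_ball {ι : Type*} [Fintype ι] [Nonempty ι]
    (x : EuclideanSpace ℝ ι) {r : ℝ} (hr : 0 ≤ r) :
    volume.real (ball x r) =
      r ^ Fintype.card ι * (√π ^ Fintype.card ι / Real.Gamma (Fintype.card ι / 2 + 1)) := by
  rw [measureReal_def, EuclideanSpace.volume_ball, ENNReal.toReal_mul, ENNReal.toReal_pow,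
    ENNReal.toReal_ofReal hr, ENNReal.toReal_ofReal (by positivity)]

theorem integral_norm_rpow_mul_sqrt_one_sub_norm_rpow_pow {n : ℕ} [NeZero n] {s p : ℝ}
    (hs : 0 < s + n) (hp : 0 < p) {q : ℕ} (hq : q ≠ 0) :
    ∫ z : EuclideanSpace ℝ (Fin n), ‖z‖ ^ s * √(1 - ‖z‖ ^ p) ^ q =
      n * (√π ^ n / Real.Gamma (n / 2 + 1)) * (p⁻¹ * (Real.Gamma ((s + n) / p) *
        Real.Gamma (q / 2 + 1) / Real.Gamma ((s + n) / p + (q / 2 + 1)))) := by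
  have hpolar : ∀ r ∈ Ioi (0 : ℝ), r ^ (n - 1) • (r ^ s * √(1 - r ^ p) ^ q) =
      r ^ (s + n - 1) * √(1 - r ^ p) ^ q := by
    intro r (hr : 0 < r)
    rw [smul_eq_mul, ← mul_assoc, ← rpow_natCast, ← rpow_add hr, Nat.cast_pred (NeZero.pos n)]
    ring_nf
  rw [integral_fun_norm_addHaar volume fun r => r ^ s * √(1 - r ^ p) ^ q,
    finrank_euclideanSpace_fin,
    setIntegral_congr_fun measurableSet_Ioi hpolar,
    integral_rpow_mul_comp_rpow_Ioi hp _ fun u => √(1 - u) ^ q,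
    integral_rpow_mul_sqrt_one_sub_pow_Ioi (div_pos hs hp) hq,
    EuclideanSpace.volume_real_ball _ zero_le_one]
  simp [nsmul_eq_mul, mul_assoc]

theorem setIntegral_norm_snd_lt {E F : Type*} [MeasurableSpace E] [NormedAddCommGroup F]
    [MeasurableSpace F] [OpensMeasurableSpace F] {μ : Measure E} {ν : Measure F} [SFinite μ]
    [SFinite ν] {f r : E → ℝ} (hr : Measurable r)
    (hf : IntegrableOn (fun p => f p.1) {p : E × F | ‖p.2‖ < r p.1} (μ.prod ν)) :
    ∫ p in {p : E × F | ‖p.2‖ < r p.1}, f p.1 ∂(μ.prod ν) =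
      ∫ x, ν.real (ball 0 (r x)) * f x ∂μ := by
  have hs : MeasurableSet {p : E × F | ‖p.2‖ < r p.1} :=
    measurableSet_lt measurable_snd.norm (hr.comp measurable_fst)
  rw [← integral_indicator hs, integral_prod _ ((integrable_indicator_iff hs).2 hf)]
  congr 1 with x
  have hfiber : (fun y => {p : E × F | ‖p.2‖ < r p.1}.indicator (fun p => f p.1) (x, y)) =
      (ball 0 (r x)).indicator fun _ => f x := by
    ext y
    simp only [indicator, mem_ofPred_eq, mem_ball_zero_iff]
  rw [hfiber, integral_indicator measurableSet_ball, setIntegral_const, smul_eq_mul]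

theorem dfun_lt_one_iff {m q : ℕ} {k : ℝ} (hk : 0 < k) (p : Vspace m × Tspace q) :
    dfun k p < 1 ↔ ‖p.2‖ < √(1 - ‖p.1‖ ^ (4 * k)) / 4 := by
  rw [dfun, rpow_lt_one_iff' (by positivity) (by positivity), rpow_two, lt_div_iff₀ four_pos,
    mul_comm, lt_sqrt (by positivity)]
  constructor <;> intro h <;> nlinarith

theorem setOf_dfun_lt_one_subset_ball {m q : ℕ} {k : ℝ} (hk : 0 < k) :
    {p : Vspace m × Tspace q | dfun k p < 1} ⊆ ball 0 1 := by
  intro p hp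
  rw [mem_ofPred_eq, dfun_lt_one_iff hk] at hp
  have hpos : 0 < 1 - ‖p.1‖ ^ (4 * k) := sqrt_pos.1 (by linarith [norm_nonneg p.2])
  have hle : √(1 - ‖p.1‖ ^ (4 * k)) ≤ 1 :=
    sqrt_le_one.2 (by linarith [rpow_nonneg (norm_nonneg p.1) (4 * k)])
  rw [mem_ball_zero_iff, Prod.norm_def, max_lt_iff]
  have h4k : 0 < 4 * k := by positivity
  exact ⟨(rpow_lt_one_iff' (norm_nonneg _) h4k).1 (by linarith), by linarith⟩

theorem setIntegral_dfun_lt_one_norm_fst_rpow {m q : ℕ} [Nonempty (Fin q)] {k : ℝ}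
    (hk : 0 < k) {γ : ℝ} (hγ : 0 ≤ γ) :
    ∫ p in {p : Vspace m × Tspace q | dfun k p < 1}, ‖p.1‖ ^ γ =
      √π ^ q / Real.Gamma (q / 2 + 1) / 4 ^ q *
        ∫ z : Vspace m, ‖z‖ ^ γ * √(1 - ‖z‖ ^ (4 * k)) ^ q := by
  have hint : IntegrableOn (fun p : Vspace m × Tspace q => ‖p.1‖ ^ γ)
      {p | dfun k p < 1} (volume.prod volume) :=
    ((continuous_fst.norm.rpow_const fun _ => Or.inr hγ).continuousOn.integrableOn_compact
      (isCompact_closedBall 0 1)).mono_set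
      ((setOf_dfun_lt_one_subset_ball hk).trans ball_subset_closedBall)
  have hS : {p : Vspace m × Tspace q | dfun k p < 1} =
      {p | ‖p.2‖ < √(1 - ‖p.1‖ ^ (4 * k)) / 4} := Set.ext (dfun_lt_one_iff hk)
  have hr : Measurable fun z : Vspace m => √(1 - ‖z‖ ^ (4 * k)) / 4 := by fun_prop
  have hfiber : ∀ z : Vspace m,
      volume.real (ball (0 : Tspace q) (√(1 - ‖z‖ ^ (4 * k)) / 4)) * ‖z‖ ^ γ =
        √π ^ q / Real.Gamma (q / 2 + 1) / 4 ^ q *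
          (‖z‖ ^ γ * √(1 - ‖z‖ ^ (4 * k)) ^ q) := by
    intro z
    rw [EuclideanSpace.volume_real_ball _ (by positivity), Fintype.card_fin, div_pow]
    ring
  rw [hS] at hint ⊢
  rw [Measure.volume_eq_prod,
    setIntegral_norm_snd_lt (f := fun z : Vspace m => ‖z‖ ^ γ) hr hint]
  simp_rw [hfiber]
  exact integral_const_mul _ _

/-- For `γ ≥ 0`,
`∫_{d<1} |z|^γ = (1/(2(γ+Q))) (1/4)^{q-1} π^{(q+m)/2} Γ((γ+m)/(4k)) / (Γ(m/2) Γ((γ+Q)/(4k)))`,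
where `Q = m + 2kq`. -/
theorem stmt8 {m q : ℕ} (hm : 1 ≤ m) (hq : 1 ≤ q) (k : ℝ) (hk : 1 ≤ k)
    (Q : ℝ) (hQ : Q = m + 2 * k * q) (γ : ℝ) (hγ : 0 ≤ γ) :
    ∫ p in {p : Vspace m × Tspace q | dfun k p < 1}, ‖p.1‖ ^ γ =
      1 / (2 * (γ + Q)) * ((1 / 4 : ℝ) ^ ((q : ℝ) - 1)) *
        π ^ (((q : ℝ) + m) / 2) * Real.Gamma ((γ + m) / (4 * k)) /
        (Real.Gamma ((m : ℝ) / 2) * Real.Gamma ((γ + Q) / (4 * k))) := by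
  have hk0 : 0 < k := by linarith
  have : NeZero m := ⟨by omega⟩
  have : Nonempty (Fin q) := ⟨⟨0, hq⟩⟩
  rw [setIntegral_dfun_lt_one_norm_fst_rpow hk0 hγ,
    integral_norm_rpow_mul_sqrt_one_sub_norm_rpow_pow (by positivity) (by positivity) (by omega)]
  have hγQ : 0 < γ + Q := by rw [hQ]; positivity
  have hm2 : (0 : ℝ) < m / 2 := by positivity
  have hQk : 0 < (γ + Q) / (4 * k) := by positivity
  have hshift : (γ + m) / (4 * k) + (q / 2 + 1) = (γ + Q) / (4 * k) + 1 := by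
    rw [hQ]; field_simp; ring
  have hpi : √π ^ m * √π ^ q = π ^ (((q : ℝ) + m) / 2) := by
    rw [← pow_add, sqrt_eq_rpow, ← rpow_natCast, ← rpow_mul pi_pos.le]
    push_cast; ring_nf
  have hquarter : (1 / 4 : ℝ) ^ ((q : ℝ) - 1) = 4 / 4 ^ q := by
    rw [rpow_sub (by norm_num), rpow_one, rpow_natCast, div_pow, one_pow]; field_simp
  rw [hshift, Gamma_add_one hQk.ne', Gamma_add_one hm2.ne', hquarter, ← hpi]
  have hΓq := Gamma_pos_of_pos (by positivity : (0 : ℝ) < q / 2 + 1)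
  have hΓm := Gamma_pos_of_pos hm2
  have hΓQ := Gamma_pos_of_pos hQk
  field_simp
  norm_num
end
end
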